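/- Euler's Pentagonal Number Theorem: for |q| < 1, ∏_{n=1}^{∞} (1 − q^n) = Σ_{n=−∞}^{∞} (−1)^n q^{n(3n+1)/2}. -/

import Mathlib

/-!
The algebraic core is a telescoping argument, `Pentagonal.tprod_one_sub_pow`: in any Hausdorff
topological ring, `∏ (1 - x ^ (n + 1)) = ∑ₖ (-1) ^ k (x ^ pentagonal (-k) - x ^ pentagonal (k + 1))`
provided the auxiliary series `A_k = ∑ₙ x ^ ((k + 1) n) ∏_{i ≤ n} (1 - x ^ (k + i + 1))` converge
and the remainders `± x ^ ((k + 1)(3k + 4) / 2) A_k` tend to zero. For `‖x‖ < 1` in a complete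
normed ring, the finite products `∏ (1 - x ^ (k + i + 1))` are bounded by `exp (1 - ‖x‖)⁻¹`
uniformly in `k`, which yields all of these at once; the sum over `ℕ` is a regrouping of the
absolutely convergent sum over `ℤ`.
-/

open Filter Topology Finset

theorem natAbs_le_pentagonal (k : ℤ) : k.natAbs ≤ pentagonal k := by
  have h := two_mul_natCast_pentagonal k
  zify
  rcases abs_cases k with ⟨hk, _⟩ | ⟨hk, _⟩ <;> rw [hk] <;> nlinarith

theorem Int.norm_negOnePow {R : Type*} [SeminormedRing R] [NormOneClass R] (k : ℤ) :
    ‖(k.negOnePow : R)‖ = 1 := by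
  rcases Int.units_eq_one_or k.negOnePow with h | h <;> simp [h]

theorem norm_pow_le_pow_of_le_of_norm_le_one {R : Type*} [SeminormedRing R] [NormOneClass R]
    {x : R} (hx : ‖x‖ ≤ 1) {m n : ℕ} (h : n ≤ m) : ‖x ^ m‖ ≤ ‖x‖ ^ n :=
  (norm_pow_le x m).trans (pow_le_pow_of_le_one (norm_nonneg x) hx h)

namespace Pentagonal

variable {R : Type*} [NormedCommRing R] [NormOneClass R] {x : R}

theorem norm_prod_one_sub_pow_le (hx : ‖x‖ < 1) (k n : ℕ) :
    ‖∏ i ∈ range n, (1 - x ^ (k + i + 1))‖ ≤ Real.exp (1 - ‖x‖)⁻¹ := by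
  have hsum : ∑ i ∈ range n, ‖-x ^ (k + i + 1)‖ ≤ (1 - ‖x‖)⁻¹ :=
    calc ∑ i ∈ range n, ‖-x ^ (k + i + 1)‖ ≤ ∑ i ∈ range n, ‖x‖ ^ i :=
          Finset.sum_le_sum fun i _ ↦ (norm_neg (x ^ (k + i + 1))).trans_le
            (norm_pow_le_pow_of_le_of_norm_le_one hx.le (by omega))
      _ ≤ ‖x‖ ^ 0 / (1 - ‖x‖) := by
          rw [range_eq_Ico]; exact geom_sum_Ico_le_of_lt_one (norm_nonneg x) hx
      _ = (1 - ‖x‖)⁻¹ := by rw [pow_zero, one_div]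
  calc ‖∏ i ∈ range n, (1 - x ^ (k + i + 1))‖
      ≤ ‖∏ i ∈ range n, (1 + -x ^ (k + i + 1)) - 1‖ + ‖(1 : R)‖ := by
        simpa only [sub_eq_add_neg] using norm_le_norm_sub_add _ (1 : R)
    _ ≤ Real.exp (∑ i ∈ range n, ‖-x ^ (k + i + 1)‖) := by
        linarith [(range n).norm_prod_one_add_sub_one_le fun i ↦ -x ^ (k + i + 1),
          norm_one (α := R)]
    _ ≤ Real.exp (1 - ‖x‖)⁻¹ := Real.exp_le_exp.2 hsum

theorem norm_pow_mul_prod_one_sub_pow_le (hx : ‖x‖ < 1) (k n : ℕ) :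
    ‖x ^ ((k + 1) * n) * ∏ i ∈ range (n + 1), (1 - x ^ (k + i + 1))‖ ≤
      Real.exp (1 - ‖x‖)⁻¹ * ‖x‖ ^ n := by
  rw [mul_comm (Real.exp _)]
  exact (norm_mul_le _ _).trans <| mul_le_mul
    (norm_pow_le_pow_of_le_of_norm_le_one hx.le (by nlinarith))
    (norm_prod_one_sub_pow_le hx k _) (norm_nonneg _) (by positivity)

theorem norm_tsum_pow_mul_prod_one_sub_pow_le (hx : ‖x‖ < 1) (k : ℕ) :
    ‖∑' n, x ^ ((k + 1) * n) * ∏ i ∈ range (n + 1), (1 - x ^ (k + i + 1))‖ ≤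
      Real.exp (1 - ‖x‖)⁻¹ * (1 - ‖x‖)⁻¹ :=
  tsum_of_norm_bounded ((hasSum_geometric_of_lt_one (norm_nonneg x) hx).mul_left _)
    (norm_pow_mul_prod_one_sub_pow_le hx k)

theorem tendsto_remainder_atTop_nhds_zero (hx : ‖x‖ < 1) :
    Tendsto (fun k ↦ (-1) ^ (k + 1) * x ^ ((k + 1) * (3 * k + 4) / 2) *
      ∑' n, x ^ ((k + 1) * n) * ∏ i ∈ range (n + 1), (1 - x ^ (k + i + 1))) atTop (𝓝 0) := by
  have hgeom := (tendsto_pow_atTop_nhds_zero_of_lt_one (norm_nonneg x) hx).const_mul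
    (Real.exp (1 - ‖x‖)⁻¹ * (1 - ‖x‖)⁻¹)
  rw [mul_zero] at hgeom
  refine squeeze_zero_norm (fun k ↦ ?_) hgeom
  have hexp : k ≤ (k + 1) * (3 * k + 4) / 2 := by
    rw [Nat.le_div_iff_mul_le two_pos]; nlinarith
  calc _ ≤ ‖(-1 : R) ^ (k + 1)‖ * ‖x ^ ((k + 1) * (3 * k + 4) / 2)‖ *
        ‖∑' n, x ^ ((k + 1) * n) * ∏ i ∈ range (n + 1), (1 - x ^ (k + i + 1))‖ := norm_mul₃_le
    _ ≤ 1 * ‖x‖ ^ k * (Real.exp (1 - ‖x‖)⁻¹ * (1 - ‖x‖)⁻¹) := by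
        gcongr
        · exact (norm_pow_le _ _).trans (by simp)
        · exact norm_pow_le_pow_of_le_of_norm_le_one hx.le hexp
        · exact norm_tsum_pow_mul_prod_one_sub_pow_le hx k
    _ = _ := by ring

variable [CompleteSpace R]

theorem summable_pow_mul_prod_one_sub_pow (hx : ‖x‖ < 1) (k : ℕ) :
    Summable fun n ↦ x ^ ((k + 1) * n) * ∏ i ∈ range (n + 1), (1 - x ^ (k + i + 1)) :=
  .of_norm_bounded ((summable_geometric_of_lt_one (norm_nonneg x) hx).mul_left _)
    (norm_pow_mul_prod_one_sub_pow_le hx k)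

theorem multipliable_one_sub_pow (hx : ‖x‖ < 1) (k : ℕ) :
    Multipliable fun n ↦ 1 - x ^ (n + k + 1) := by
  simp_rw [sub_eq_add_neg]
  refine multipliable_one_add_of_summable <| .of_nonneg_of_le (fun _ ↦ norm_nonneg _) (fun n ↦ ?_)
    (summable_geometric_of_lt_one (norm_nonneg x) hx)
  rw [norm_neg]
  exact norm_pow_le_pow_of_le_of_norm_le_one hx.le (by omega)

theorem summable_negOnePow_mul_pow_pentagonal (hx : ‖x‖ < 1) :
    Summable fun k : ℤ ↦ (k.negOnePow : R) * x ^ pentagonal k := by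
  have hbound (k : ℤ) : ‖(k.negOnePow : R) * x ^ pentagonal k‖ ≤ ‖x‖ ^ k.natAbs :=
    calc ‖(k.negOnePow : R) * x ^ pentagonal k‖
        ≤ ‖(k.negOnePow : R)‖ * ‖x ^ pentagonal k‖ := norm_mul_le _ _
      _ ≤ 1 * ‖x‖ ^ k.natAbs := by
        gcongr
        · exact (Int.norm_negOnePow k).le
        · exact norm_pow_le_pow_of_le_of_norm_le_one hx.le (natAbs_le_pentagonal k)
      _ = ‖x‖ ^ k.natAbs := one_mul _
  have hgeom := summable_geometric_of_lt_one (norm_nonneg x) hx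
  exact .of_nat_of_neg (.of_norm_bounded hgeom fun n ↦ hbound n)
    (.of_norm_bounded hgeom fun n ↦ by simpa using hbound (-n))

theorem hasSum_negOnePow_mul_pow_pentagonal (hx : ‖x‖ < 1) :
    HasSum (fun k : ℤ ↦ (k.negOnePow : R) * x ^ pentagonal k) (∏' n, (1 - x ^ (n + 1))) := by
  have hsum := summable_negOnePow_mul_pow_pentagonal hx
  have hsum_neg := (Equiv.neg ℤ).hasSum_iff.2 hsum.hasSum
  have hnat : HasSum (fun n : ℕ ↦ (-1) ^ n * (x ^ pentagonal (-n) - x ^ pentagonal (n + 1)))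
      (∑' k : ℤ, (k.negOnePow : R) * x ^ pentagonal k) := by
    convert hsum_neg.nat_add_neg_add_one using 2 with n
    simp only [Function.comp_apply, Equiv.neg_apply, neg_neg, Int.negOnePow_neg,
      Int.negOnePow_succ, Units.val_neg, Int.cast_neg, Int.coe_negOnePow_natCast]
    push_cast
    ring
  rw [tprod_one_sub_pow (tendsto_pow_atTop_nhds_zero_of_norm_lt_one hx)
    (summable_pow_mul_prod_one_sub_pow hx) (multipliable_one_sub_pow hx) hnat.summable
    (tendsto_remainder_atTop_nhds_zero hx), hnat.tsum_eq]
  exact hsum.hasSum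

end Pentagonal

/-- Euler's Pentagonal Number Theorem. -/
theorem pentagonal_number_theorem (q : ℂ) (hq : ‖q‖ < 1) :
    (∏' n : ℕ, (1 - q ^ (n + 1))) =
      ∑' n : ℤ, (-1 : ℂ) ^ n * q ^ (n * (3 * n + 1) / 2).toNat := by
  rw [← (Pentagonal.hasSum_negOnePow_mul_pow_pentagonal hq).tsum_eq, ← (Equiv.neg ℤ).tsum_eq]
  simp only [Equiv.neg_apply, pentagonal_neg, Int.negOnePow_neg, Int.cast_negOnePow]
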